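/- arXiv:1911.04159 — 6 statements merged into one kernel-verified Lean document; each statement's English description precedes it below -/
import Mathlib

section
/- For any real numbers t, t_1, ..., t_n with t = t_1 + ... + t_n, one has 1 - cos(t) ≤ n * ∑_{i=1}^n (1 - cos(t_i)). -/
lemma abs_sin_sum_le (n : ℕ) (f : Fin n → ℝ) :
    |Real.sin (∑ i, f i)| ≤ ∑ i, |Real.sin (f i)| := by
  induction n with
  | zero => simp
  | succ m ih =>
    rw [Fin.sum_univ_succ, Fin.sum_univ_succ, Real.sin_add]
    calc |Real.sin (f 0) * Real.cos (∑ i : Fin m, f (i.succ)) +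
            Real.cos (f 0) * Real.sin (∑ i : Fin m, f (i.succ))|
        ≤ |Real.sin (f 0) * Real.cos (∑ i : Fin m, f (i.succ))| +
          |Real.cos (f 0) * Real.sin (∑ i : Fin m, f (i.succ))| := abs_add_le _ _
      _ ≤ |Real.sin (f 0)| * 1 + 1 * |Real.sin (∑ i : Fin m, f (i.succ))| := by
          rw [abs_mul, abs_mul]
          gcongr
          · exact Real.abs_cos_le_one _
          · exact Real.abs_cos_le_one _
      _ ≤ |Real.sin (f 0)| + ∑ i : Fin m, |Real.sin (f (i.succ))| := by
          rw [mul_one, one_mul]; gcongr; exact ih _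

lemma one_sub_cos_eq (x : ℝ) : 1 - Real.cos x = 2 * Real.sin (x / 2) ^ 2 := by
  have h : Real.cos (2 * (x / 2)) = 2 * Real.cos (x / 2) ^ 2 - 1 := Real.cos_two_mul _
  rw [mul_div_cancel₀ x two_ne_zero] at h
  nlinarith [Real.sin_sq_add_cos_sq (x / 2)]

/-- Split of cosines: if `t = t₁ + ⋯ + tₙ`, then `1 - cos t ≤ n * ∑ᵢ (1 - cos tᵢ)`. -/
theorem cosine_split (n : ℕ) (t : ℝ) (ts : Fin n → ℝ) (ht : t = ∑ i, ts i) :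
    1 - Real.cos t ≤ (n : ℝ) * ∑ i, (1 - Real.cos (ts i)) := by
  have h1 : t / 2 = ∑ i, ts i / 2 := by rw [ht, Finset.sum_div]
  have h2 : |Real.sin (t / 2)| ≤ ∑ i, |Real.sin (ts i / 2)| := by
    rw [h1]; exact abs_sin_sum_le n _
  have h3 : (∑ i, |Real.sin (ts i / 2)|) ^ 2 ≤
      (n : ℝ) * ∑ i, |Real.sin (ts i / 2)| ^ 2 := by
    have := sq_sum_le_card_mul_sum_sq (s := Finset.univ)
      (f := fun i : Fin n => |Real.sin (ts i / 2)|)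
    simpa using this
  have h4 : Real.sin (t / 2) ^ 2 ≤ (n : ℝ) * ∑ i, Real.sin (ts i / 2) ^ 2 := by
    calc Real.sin (t / 2) ^ 2 = |Real.sin (t / 2)| ^ 2 := (sq_abs _).symm
      _ ≤ (∑ i, |Real.sin (ts i / 2)|) ^ 2 := pow_le_pow_left₀ (abs_nonneg _) h2 2
      _ ≤ (n : ℝ) * ∑ i, |Real.sin (ts i / 2)| ^ 2 := h3
      _ = (n : ℝ) * ∑ i, Real.sin (ts i / 2) ^ 2 := by simp [sq_abs]
  rw [one_sub_cos_eq]
  calc 2 * Real.sin (t / 2) ^ 2 ≤ 2 * ((n : ℝ) * ∑ i, Real.sin (ts i / 2) ^ 2) := by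
        linarith
    _ = (n : ℝ) * ∑ i, 2 * Real.sin (ts i / 2) ^ 2 := by
        rw [← Finset.mul_sum]; ring
    _ = (n : ℝ) * ∑ i, (1 - Real.cos (ts i)) := by
        simp_rw [one_sub_cos_eq]
end

section
/- For the step distribution D(x) = (2d)^{-1} 𝟙{|x|₁ = 1} of simple random walk on ℤ^d and for all k, l ∈ ℝ^d, one has |∑_x cos(l·x)(1 - cos(k·x)) D(x)| ≤ 1 - D̂(k), where D̂(k) = ∑_x cos(k·x) D(x). -/
/-!
Since `|cos (l·x)| ≤ 1` and `(1 - cos (k·x)) D(x) ≥ 0`, the left side is at most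
`∑ (1 - cos (k·x)) D(x) = ∑ D - D̂(k)`, and the total mass `∑ D` is at most `1`.
-/

/-- The step distribution of simple random walk on `ℤ^d`:
`D(x) = (2d)⁻¹ 𝟙{|x|₁ = 1}`. -/
noncomputable def stepD (d : ℕ) (x : Fin d → ℤ) : ℝ :=
  if (∑ i, (x i).natAbs) = 1 then 1 / (2 * d) else 0

open Finset Real

theorem abs_tsum_mul_one_sub_cos_mul_le {α : Type*} {w : α → ℝ} (hw : ∀ x, 0 ≤ w x)
    (hws : Summable w) (hw1 : ∑' x, w x ≤ 1) {f : α → ℝ} (hf : ∀ x, |f x| ≤ 1) (b : α → ℝ) :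
    |∑' x, f x * (1 - cos (b x)) * w x| ≤ 1 - ∑' x, cos (b x) * w x := by
  have hcos : Summable fun x => cos (b x) * w x :=
    hws.of_norm_bounded fun x => by
      rw [norm_mul, norm_of_nonneg (hw x)]
      exact mul_le_of_le_one_left (hw x) (abs_cos_le_one _)
  have hdiff : Summable fun x => (1 - cos (b x)) * w x :=
    (hws.sub hcos).congr fun x => by ring
  have hbound : ∀ x, ‖f x * (1 - cos (b x)) * w x‖ ≤ (1 - cos (b x)) * w x := fun x => by
    have hc : 0 ≤ (1 - cos (b x)) * w x := mul_nonneg (sub_nonneg.2 (cos_le_one _)) (hw x)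
    rw [mul_assoc, norm_mul, norm_of_nonneg hc]
    exact mul_le_of_le_one_left hc (hf x)
  calc |∑' x, f x * (1 - cos (b x)) * w x|
      ≤ ∑' x, (1 - cos (b x)) * w x := tsum_of_norm_bounded hdiff.hasSum hbound
    _ = ∑' x, w x - ∑' x, cos (b x) * w x := by
      rw [← hws.tsum_sub hcos]; exact tsum_congr fun x => by ring
    _ ≤ 1 - ∑' x, cos (b x) * w x := by linarith

theorem exists_eq_piSingle_of_sum_natAbs_eq_one {ι : Type*} [Fintype ι] [DecidableEq ι]
    {x : ι → ℤ} (h : ∑ i, (x i).natAbs = 1) : ∃ i, x = Pi.single i (x i) ∧ (x i).natAbs = 1 := by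
  let n : ι →₀ ℕ := Finsupp.equivFunOnFinite.symm fun i => (x i).natAbs
  obtain ⟨i, hi⟩ := (Finsupp.sum_eq_one_iff n).1 (by rwa [Finsupp.sum_fintype _ _ fun _ => rfl])
  have hn : ∀ j, (x j).natAbs = Finsupp.single i 1 j := fun j => by
    rw [← hi]; rfl
  refine ⟨i, funext fun j => ?_, by simpa using hn i⟩
  rcases eq_or_ne j i with rfl | hji
  · simp
  · simpa [hji, Finsupp.single_apply, Ne.symm hji] using hn j

def unitVectors (d : ℕ) : Finset (Fin d → ℤ) :=
  (univ ×ˢ {1, -1}).image fun p => Pi.single p.1 p.2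

theorem card_unitVectors_le (d : ℕ) : #(unitVectors d) ≤ 2 * d :=
  calc #(unitVectors d) ≤ #(univ ×ˢ ({1, -1} : Finset ℤ)) := card_image_le
    _ ≤ 2 * d := by
      rw [card_product, card_univ, Fintype.card_fin, mul_comm]
      exact Nat.mul_le_mul_right d card_le_two

theorem stepD_eq_zero_of_notMem {d : ℕ} {x : Fin d → ℤ} (hx : x ∉ unitVectors d) :
    stepD d x = 0 := by
  refine if_neg fun h => hx ?_
  obtain ⟨i, hxi, hi⟩ := exists_eq_piSingle_of_sum_natAbs_eq_one h
  refine mem_image.2 ⟨(i, x i), mem_product.2 ⟨mem_univ _, ?_⟩, hxi.symm⟩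
  rcases Int.natAbs_eq_iff.1 hi with h1 | h1 <;> simp [h1]

theorem stepD_nonneg (d : ℕ) (x : Fin d → ℤ) : 0 ≤ stepD d x := by
  unfold stepD; split <;> positivity

theorem summable_stepD (d : ℕ) : Summable (stepD d) :=
  summable_of_ne_finset_zero fun _ => stepD_eq_zero_of_notMem

theorem tsum_stepD_le_one (d : ℕ) : ∑' x, stepD d x ≤ 1 := by
  rw [tsum_eq_sum fun _ => stepD_eq_zero_of_notMem]
  calc ∑ x ∈ unitVectors d, stepD d x ≤ #(unitVectors d) • (1 / (2 * d) : ℝ) :=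
        sum_le_card_nsmul _ _ _ fun x _ => by unfold stepD; split; exacts [le_rfl, by positivity]
    _ ≤ 1 := by
      rw [nsmul_eq_mul, ← div_eq_mul_one_div]
      exact div_le_one_of_le₀ (mod_cast card_unitVectors_le d) (by positivity)

theorem fourier_Dk_bound_general (d : ℕ) (k l : Fin d → ℝ) :
    |∑' x : Fin d → ℤ,
        Real.cos (∑ i, l i * (x i : ℝ)) * (1 - Real.cos (∑ i, k i * (x i : ℝ))) * stepD d x| ≤
      1 - ∑' x : Fin d → ℤ, Real.cos (∑ i, k i * (x i : ℝ)) * stepD d x :=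
  abs_tsum_mul_one_sub_cos_mul_le (stepD_nonneg d) (summable_stepD d) (tsum_stepD_le_one d)
    (fun _ => abs_cos_le_one _) _

/-- `|∑_x cos(l·x)(1 - cos(k·x)) D(x)| ≤ 1 - D̂(k)`, where
`D̂(k) = ∑_x cos(k·x) D(x)`. -/
theorem fourier_Dk_bound (d : ℕ) (hd : 0 < d) (k l : Fin d → ℝ) :
    |∑' x : Fin d → ℤ,
        Real.cos (∑ i, l i * (x i : ℝ)) * (1 - Real.cos (∑ i, k i * (x i : ℝ))) * stepD d x| ≤
      1 - ∑' x : Fin d → ℤ, Real.cos (∑ i, k i * (x i : ℝ)) * stepD d x :=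
  fourier_Dk_bound_general d k l
end

section
/- Let J(x) = 𝟙{|x|₁ = 1} on ℤ^d and m ∈ ℕ with m ≥ |x|₁ and m - |x|₁ even. Then J^{∗m}(x) ≤ m! · (2d)^{(m-|x|₁)/2}. -/
/-- Convolution of two functions on `ℤ^d`: `(f ∗ g)(x) = ∑_y f(y) g(x - y)`. -/
noncomputable def convZd {d : ℕ} (f g : (Fin d → ℤ) → ℝ) (x : Fin d → ℤ) : ℝ :=
  ∑' y : Fin d → ℤ, f y * g (x - y)

/-- `J(x) = 𝟙{|x|₁ = 1}` on `ℤ^d`. -/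
def Jfun (d : ℕ) (x : Fin d → ℤ) : ℝ :=
  if (∑ i, (x i).natAbs) = 1 then 1 else 0

/-- The `m`-fold convolution `J^{∗m}`, with `J^{∗0} = δ₀` and `J^{∗1} = J`. -/
noncomputable def Jconv (d : ℕ) : ℕ → (Fin d → ℤ) → ℝ
  | 0 => fun x => if x = 0 then 1 else 0
  | n + 1 => convZd (Jfun d) (Jconv d n)

/-!
Induct on `m` with the recursion `J^{∗(m+1)}(x) = ∑_{i, ±} J^{∗m}(x ∓ eᵢ)`, proving
`J^{∗m}(x) ≤ b(m, |x|₁)` where `b(m, n) = m! (2d)^{⌊(m-n)/2⌋}` for `n ≤ m` and `0` otherwise.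
Write `n = |x|₁` and `k = ⌊(m+1-n)/2⌋`. At most `n` of the `2d` neighbours of `x` are closer to
the origin, each contributing at most `b(m, n-1) = m! (2d)^k`; the remaining ones have norm `n+1`
and contribute `b(m, n+1) ≤ m! (2d)^{k-1}` each, hence at most `m! (2d)^k` together. The total is
`(n+1) m! (2d)^k ≤ (m+1)! (2d)^k`, with the support of `b` handling the boundary cases `n ≥ m`.
-/

open Finset

section L1Norm

variable {ι : Type*} [Fintype ι]

def l1Norm (x : ι → ℤ) : ℕ := ∑ i, (x i).natAbs

variable [DecidableEq ι]

lemma l1Norm_single (i : ι) (c : ℤ) : l1Norm (Pi.single i c) = c.natAbs := by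
  simp [l1Norm, Pi.apply_single (fun _ => Int.natAbs) (fun _ => Int.natAbs_zero)]

lemma l1Norm_sub_single_add (x : ι → ℤ) (i : ι) (c : ℤ) :
    l1Norm (x - Pi.single i c) + (x i).natAbs = l1Norm x + (x i - c).natAbs := by
  have hpt : ∀ j, (x j - (Pi.single i c : ι → ℤ) j).natAbs + (Pi.single i (x i).natAbs : ι → ℕ) j
      = (x j).natAbs + (Pi.single i (x i - c).natAbs : ι → ℕ) j := by
    intro j
    rcases eq_or_ne j i with rfl | hj
    · simp [add_comm]
    · simp [Pi.single_eq_of_ne hj]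
  simpa [l1Norm, sum_add_distrib] using sum_congr rfl fun j (_ : j ∈ univ) => hpt j

lemma eq_single_of_l1Norm_eq_one {y : ι → ℤ} (h : l1Norm y = 1) :
    ∃ i, (y i).natAbs = 1 ∧ y = Pi.single i (y i) := by
  obtain ⟨i, -, hi⟩ := exists_ne_zero_of_sum_ne_zero (h.trans_ne one_ne_zero)
  have hsplit := add_sum_erase univ (fun j => (y j).natAbs) (mem_univ i)
  have hrest : ∀ j ∈ univ.erase i, (y j).natAbs = 0 :=
    sum_eq_zero_iff.mp (by unfold l1Norm at h; omega)
  refine ⟨i, by unfold l1Norm at h; omega, funext fun j => ?_⟩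
  rcases eq_or_ne j i with rfl | hj
  · simp
  · simpa [Pi.single_eq_of_ne hj] using hrest j (mem_erase.mpr ⟨hj, mem_univ j⟩)

lemma sum_neighbors_le (g : ℕ → ℝ) (hg : ∀ n, 0 ≤ g n) (x : ι → ℤ) :
    ∑ i, ∑ c ∈ ({1, -1} : Finset ℤ), g (l1Norm (x - Pi.single i c))
      ≤ l1Norm x * g (l1Norm x - 1) + 2 * Fintype.card ι * g (l1Norm x + 1) := by
  set n := l1Norm x
  have hcoord : ∀ i, ∑ c ∈ ({1, -1} : Finset ℤ), g (l1Norm (x - Pi.single i c))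
      ≤ (x i).natAbs * g (n - 1) + 2 * g (n + 1) := by
    intro i
    have hup := l1Norm_sub_single_add x i 1
    have hdown := l1Norm_sub_single_add x i (-1)
    have hgn := hg (n - 1)
    have hgn' := hg (n + 1)
    rw [sum_pair (by norm_num)]
    rcases lt_trichotomy (x i) 0 with hneg | hzero | hpos
    · have hx : (1 : ℝ) ≤ (x i).natAbs := by exact_mod_cast (by omega : 1 ≤ (x i).natAbs)
      rw [show l1Norm (x - Pi.single i 1) = n + 1 by omega,
        show l1Norm (x - Pi.single i (-1)) = n - 1 by omega]
      nlinarith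
    · rw [show l1Norm (x - Pi.single i 1) = n + 1 by omega,
        show l1Norm (x - Pi.single i (-1)) = n + 1 by omega]
      nlinarith [Nat.cast_nonneg (α := ℝ) (x i).natAbs]
    · have hx : (1 : ℝ) ≤ (x i).natAbs := by exact_mod_cast (by omega : 1 ≤ (x i).natAbs)
      rw [show l1Norm (x - Pi.single i 1) = n - 1 by omega,
        show l1Norm (x - Pi.single i (-1)) = n + 1 by omega]
      nlinarith
  calc _ ≤ ∑ i, ((x i).natAbs * g (n - 1) + 2 * g (n + 1)) := sum_le_sum fun i _ => hcoord i
    _ = n * g (n - 1) + 2 * Fintype.card ι * g (n + 1) := by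
      rw [sum_add_distrib, ← sum_mul, sum_const, card_univ, nsmul_eq_mul]
      push_cast [n, l1Norm]
      ring

end L1Norm

lemma Jfun_eq_ite_l1Norm (d : ℕ) (y : Fin d → ℤ) : Jfun d y = if l1Norm y = 1 then 1 else 0 :=
  rfl

lemma convZd_Jfun {d : ℕ} (g : (Fin d → ℤ) → ℝ) (x : Fin d → ℤ) :
    convZd (Jfun d) g x = ∑ i, ∑ c ∈ ({1, -1} : Finset ℤ), g (x - Pi.single i c) := by
  have hinj : Set.InjOn (fun p : Fin d × ℤ => (Pi.single p.1 p.2 : Fin d → ℤ))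
      ((univ ×ˢ {1, -1} : Finset (Fin d × ℤ)) : Set (Fin d × ℤ)) := by
    rintro ⟨i, c⟩ hc ⟨j, c'⟩ - h
    have hc0 : c ≠ 0 := by simp only [coe_product, Set.mem_prod, coe_insert, coe_singleton,
      Set.mem_insert_iff, Set.mem_singleton_iff] at hc; omega
    have hij : i = j := by
      by_contra hij
      exact hc0 (by simpa [Pi.single_eq_of_ne hij] using congrFun h i)
    subst hij
    simpa using congrFun h i
  have hsupp : ∀ y ∉ (univ ×ˢ ({1, -1} : Finset ℤ)).image fun p => Pi.single p.1 p.2,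
      Jfun d y * g (x - y) = 0 := by
    intro y hy
    have hne : l1Norm y ≠ 1 := by
      intro h1
      obtain ⟨i, hi, hy'⟩ := eq_single_of_l1Norm_eq_one h1
      exact hy (mem_image.mpr ⟨(i, y i), by simp only [mem_product, mem_univ, mem_insert, mem_singleton, true_and]; omega,
        hy'.symm⟩)
    simp [Jfun_eq_ite_l1Norm, hne]
  unfold convZd
  rw [tsum_eq_sum hsupp, sum_image hinj, sum_product]
  refine sum_congr rfl fun i _ => sum_congr rfl fun c hc => ?_
  have hJ : Jfun d (Pi.single i c) = 1 := by
    have : c.natAbs = 1 := by simp only [mem_insert, mem_singleton] at hc; omega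
    rw [Jfun_eq_ite_l1Norm, l1Norm_single, this, if_pos rfl]
  rw [hJ, one_mul]

noncomputable def walkBound (d m n : ℕ) : ℝ :=
  if n ≤ m then m.factorial * (2 * d : ℝ) ^ ((m - n) / 2) else 0

lemma walkBound_nonneg (d m n : ℕ) : 0 ≤ walkBound d m n := by
  unfold walkBound; split_ifs <;> positivity

lemma walkBound_step (d m n : ℕ) :
    n * walkBound d m (n - 1) + 2 * d * walkBound d m (n + 1) ≤ walkBound d (m + 1) n := by
  by_cases hn : n ≤ m + 1
  · set B : ℝ := m.factorial * (2 * d : ℝ) ^ ((m + 1 - n) / 2) with hB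
    have htoward : n * walkBound d m (n - 1) ≤ n * B := by
      rcases Nat.eq_zero_or_pos n with rfl | hpos
      · simp
      · rw [walkBound, if_pos (by omega), show (m - (n - 1)) / 2 = (m + 1 - n) / 2 by omega]
    have haway : 2 * d * walkBound d m (n + 1) ≤ (m + 1 - n : ℕ) * B := by
      by_cases hn' : n + 1 ≤ m
      · have hk : (m + 1 - n) / 2 = (m - (n + 1)) / 2 + 1 := by omega
        have h1 : (1 : ℝ) ≤ (m + 1 - n : ℕ) := by exact_mod_cast (by omega : 1 ≤ m + 1 - n)
        rw [walkBound, if_pos hn']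
        calc _ = B := by rw [hB, hk, pow_succ]; ring
          _ ≤ _ := le_mul_of_one_le_left (by positivity) h1
      · rw [walkBound, if_neg hn', mul_zero]
        positivity
    calc _ ≤ n * B + (m + 1 - n : ℕ) * B := add_le_add htoward haway
      _ = walkBound d (m + 1) n := by
        rw [walkBound, if_pos hn, Nat.factorial_succ, Nat.cast_sub hn, hB]
        push_cast
        ring
  · simp [walkBound, hn, show ¬ n - 1 ≤ m by omega, show ¬ n + 1 ≤ m by omega]

lemma Jconv_le_walkBound (d m : ℕ) (x : Fin d → ℤ) : Jconv d m x ≤ walkBound d m (l1Norm x) := by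
  induction m generalizing x with
  | zero =>
    rcases eq_or_ne x 0 with rfl | hx
    · simp [Jconv, walkBound, l1Norm]
    · simpa [Jconv, hx] using walkBound_nonneg d 0 (l1Norm x)
  | succ m ih =>
    calc Jconv d (m + 1) x
        = ∑ i, ∑ c ∈ ({1, -1} : Finset ℤ), Jconv d m (x - (Pi.single i c : Fin d → ℤ)) :=
          convZd_Jfun (Jconv d m) x
      _ ≤ ∑ i, ∑ c ∈ ({1, -1} : Finset ℤ), walkBound d m (l1Norm (x - Pi.single i c)) :=
        sum_le_sum fun i _ => sum_le_sum fun c _ => ih (x - Pi.single i c)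
      _ ≤ l1Norm x * walkBound d m (l1Norm x - 1) + 2 * d * walkBound d m (l1Norm x + 1) := by
        simpa only [Fintype.card_fin] using sum_neighbors_le _ (walkBound_nonneg d m) x
      _ ≤ _ := walkBound_step d m _

theorem Jconv_le_of_even_general (d m : ℕ) (x : Fin d → ℤ)
    (hm : (∑ i, (x i).natAbs) ≤ m) :
    Jconv d m x ≤ (m.factorial : ℝ) * (2 * d : ℝ) ^ ((m - ∑ i, (x i).natAbs) / 2) :=
  (Jconv_le_walkBound d m x).trans_eq (if_pos hm)

/-- If `m ≥ |x|₁` and `m - |x|₁` is even, then `J^{∗m}(x) ≤ m! (2d)^{(m-|x|₁)/2}`. -/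
theorem Jconv_le_of_even (d m : ℕ) (x : Fin d → ℤ)
    (hm : (∑ i, (x i).natAbs) ≤ m) (heven : Even (m - ∑ i, (x i).natAbs)) :
    Jconv d m x ≤ (m.factorial : ℝ) * (2 * d : ℝ) ^ ((m - ∑ i, (x i).natAbs) / 2) :=
  Jconv_le_of_even_general d m x hm
end

section
/- Assuming Russo's formula and the BK inequality as hypotheses, for subcritical site percolation on ℤ^d the map p ↦ ∑_x τ_p(x) =: T(p) satisfies the differential inequality T'(p) ≤ T(p)², i.e., d/dp τ̂_p(0) ≤ τ̂_p(0)². -/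
open MeasureTheory

/-- A site percolation configuration on `ℤ^d`. -/
abbrev Config (d : ℕ) := (Fin d → ℤ) → Bool

/-- The ℓ¹ norm of a point of `ℤ^d`. -/
def norm1 {d : ℕ} (x : Fin d → ℤ) : ℕ := ∑ i, (x i).natAbs

/-- Nearest-neighbor adjacency on `ℤ^d`. -/
def adj {d : ℕ} (x y : Fin d → ℤ) : Prop := norm1 (x - y) = 1

/-- `x ↔ y` in `ω`: a nearest-neighbor path with occupied interior vertices, `x ≠ y`. -/
def Connected {d : ℕ} (ω : Config d) (x y : Fin d → ℤ) : Prop :=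
  x ≠ y ∧ ∃ l : List (Fin d → ℤ), List.Chain adj x (l ++ [y]) ∧ ∀ v ∈ l, ω v = true

/-- The cluster of `x`. -/
def cluster {d : ℕ} (ω : Config d) (x : Fin d → ℤ) : Set (Fin d → ℤ) :=
  {x} ∪ {y | ω y = true ∧ Connected ω x y}

/-- `μ` is the Bernoulli product measure with density `p`. -/
def IsBernoulli {d : ℕ} (p : ℝ) (μ : Measure (Config d)) : Prop :=
  ∀ (s : Finset (Fin d → ℤ)) (η : (Fin d → ℤ) → Bool),
    μ {ω | ∀ v ∈ s, ω v = η v} =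
      ∏ v ∈ s, (if η v then ENNReal.ofReal p else ENNReal.ofReal (1 - p))

/-- The two-point function `τ_p(x) = P_p(0 ↔ x)`. -/
noncomputable def tau {d : ℕ} (μ : Measure (Config d)) (x : Fin d → ℤ) : ℝ :=
  (μ {ω | Connected ω 0 x}).toReal

/-- The origin percolates: its cluster is infinite. -/
def Percolates {d : ℕ} (ω : Config d) : Prop := (cluster ω 0).Infinite

/-- The critical point `p_c` of the family `p ↦ μ p`. -/
noncomputable def pc {d : ℕ} (μ : ℝ → Measure (Config d)) : ℝ :=
  sInf {p | p ∈ Set.Icc (0 : ℝ) 1 ∧ μ p {ω | Percolates ω} ≠ 0}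

/-- `y` is pivotal for the event `A` in configuration `ω`. -/
def Pivotal {d : ℕ} (A : Set (Config d)) (y : Fin d → ℤ) (ω : Config d) : Prop :=
  Function.update ω y true ∈ A ∧ Function.update ω y false ∉ A

/-- An increasing event. -/
def IncreasingEvent {d : ℕ} (A : Set (Config d)) : Prop :=
  ∀ ω ω' : Config d, (∀ v, ω v = true → ω' v = true) → ω ∈ A → ω' ∈ A

/-- Disjoint occurrence `A ∘ B`. -/
def DisjOcc {d : ℕ} (A B : Set (Config d)) : Set (Config d) :=
  {ω | ∃ K L : Set (Fin d → ℤ), Disjoint K L ∧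
    (∀ ω', (∀ v ∈ K, ω' v = ω v) → ω' ∈ A) ∧
    (∀ ω', (∀ v ∈ L, ω' v = ω v) → ω' ∈ B)}

/-!
Opening a pivotal site `y` for `{0 ↔ x}` connects `0` to `x`; erasing loops from such an occupied
path leaves a self-avoiding one, which must pass through `y`, and splitting it at `y` gives two
disjoint witnesses, one for `{0 ↔ y}` and one for `{y ↔ x}`. BK and the translation invariance of the Bernoulli measure
then bound `P_p(y pivotal)` by `τ_p(y) τ_p(x - y)`, and summing over `x` and `y` bounds the
derivative given by Russo's formula by `τ̂_p(0)²`.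
-/

open ENNReal SymbolicDynamics

namespace List

variable {α : Type*} {R : α → α → Prop}

theorem exists_subset_isChain_nodup {a b : α} (hab : a ≠ b) :
    ∀ {l : List α}, IsChain R (a :: (l ++ [b])) →
      ∃ l' ⊆ l, IsChain R (a :: (l' ++ [b])) ∧ (a :: (l' ++ [b])).Nodup
  | [], h => ⟨[], nil_subset _, h, by simpa using hab⟩
  | c :: t, h => by
    obtain ⟨hac, hct⟩ := isChain_cons_cons.mp (by simpa using h)
    by_cases hcb : c = b
    · subst hcb
      exact ⟨[], nil_subset _, by simpa using hac, by simpa using hab⟩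
    obtain ⟨t', ht't, hchain, hnodup⟩ := exists_subset_isChain_nodup hcb hct
    by_cases hat' : a ∈ c :: t'
    · -- the path returns to `a`: drop the loop
      obtain ⟨t₁, t₂, ht'⟩ := append_of_mem hat'
      have hsuffix : a :: (t₂ ++ [b]) <:+ c :: (t' ++ [b]) :=
        ⟨t₁, by rw [← cons_append (a := c), ht']; simp⟩
      refine ⟨t₂, fun v hv => cons_subset_cons c ht't ?_, hchain.suffix hsuffix,
        hnodup.sublist hsuffix.sublist⟩
      rw [ht']
      exact mem_append_right _ (mem_cons_of_mem _ hv)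
    · refine ⟨c :: t', cons_subset_cons c ht't, isChain_cons_cons.mpr ⟨hac, hchain⟩, ?_⟩
      exact nodup_cons.mpr ⟨by simpa [hab] using hat', hnodup⟩

end List

theorem ENNReal.tsum_tsum_toReal_eq {α β : Type*} {f : α → β → ℝ≥0∞}
    (hf : ∑' a, ∑' b, f a b ≠ ∞) : ∑' a, ∑' b, (f a b).toReal = (∑' a, ∑' b, f a b).toReal := by
  have hinner (a : α) : ∑' b, f a b ≠ ∞ := ne_top_of_le_ne_top hf (ENNReal.le_tsum a)
  rw [ENNReal.tsum_toReal_eq hinner]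
  exact tsum_congr fun a =>
    (ENNReal.tsum_toReal_eq fun b => ne_top_of_le_ne_top (hinner a) (ENNReal.le_tsum b)).symm

namespace SymbolicDynamics.FullShift

variable {G A : Type*}

def cylinders (G A : Type*) : Set (Set (G → A)) :=
  {S | ∃ s x, S = cylinder s x}

theorem isPiSystem_cylinders : IsPiSystem (cylinders G A) := by
  classical
  rintro _ ⟨s, x, rfl⟩ _ ⟨s', x', rfl⟩ ⟨ω₀, hω₀, hω₀'⟩
  refine ⟨s ∪ s', s.piecewise x x', Set.ext fun ω => ?_⟩
  simp only [Set.mem_inter_iff, mem_cylinder, Finset.mem_union]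
  constructor
  · rintro ⟨h, h'⟩ v (hv | hv)
    · rw [Finset.piecewise_eq_of_mem _ _ _ hv, h v hv]
    · by_cases hvs : v ∈ s
      · rw [Finset.piecewise_eq_of_mem _ _ _ hvs, h v hvs]
      · rw [Finset.piecewise_eq_of_notMem _ _ _ hvs, h' v hv]
  · intro h
    refine ⟨fun v hv => by simpa [hv] using h v (.inl hv), fun v hv => ?_⟩
    by_cases hvs : v ∈ s
    -- `x` and `x'` agree on `s ∩ s'` because the two cylinders meet at `ω₀`
    · rw [← hω₀' v hv, hω₀ v hvs, h v (.inl hvs), Finset.piecewise_eq_of_mem _ _ _ hvs]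
    · simpa [hvs] using h v (.inr hv)

theorem shift_preimage_cylinder [AddGroup G] (g : G) (s : Finset G) (x : G → A) :
    shift g ⁻¹' cylinder s x = cylinder (s.map (addLeftEmbedding g)) (shift (-g) x) := by
  ext ω
  simp [mem_cylinder]

variable [MeasurableSpace A]

theorem measurableSet_cylinder [MeasurableSingletonClass A] (s : Finset G) (x : G → A) :
    MeasurableSet (cylinder s x) := by
  rw [cylinder_eq_set_pi]
  exact .pi s.countable_toSet fun _ _ => measurableSet_singleton _

theorem pi_eq_generateFrom_cylinders [MeasurableSingletonClass A] [Countable A] :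
    (MeasurableSpace.pi : MeasurableSpace (G → A)) = .generateFrom (cylinders G A) := by
  refine le_antisymm ?_ (MeasurableSpace.generateFrom_le ?_)
  · have hcoord (v : G) : Measurable[.generateFrom (cylinders G A)] fun ω : G → A => ω v := by
      refine @measurable_to_countable' _ _ _ _ (.generateFrom _) _ fun b => ?_
      apply MeasurableSpace.measurableSet_generateFrom
      exact ⟨{v}, fun _ => b, by ext; simp [mem_cylinder]⟩
    exact (@measurable_pi_iff _ _ _ (.generateFrom _) _ id).mpr hcoord
  · rintro _ ⟨s, x, rfl⟩
    exact measurableSet_cylinder s x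

theorem measurable_shift [AddMonoid G] (g : G) : Measurable (shift g : (G → A) → G → A) :=
  measurable_pi_lambda _ fun v => measurable_pi_apply (g + v)

end SymbolicDynamics.FullShift

variable {d : ℕ}

theorem IsBernoulli.isProbabilityMeasure {q : ℝ} {m : Measure (Config d)} (hm : IsBernoulli q m) :
    IsProbabilityMeasure m :=
  ⟨by simpa using hm ∅ default⟩

theorem IsBernoulli.map_shift {q : ℝ} {m : Measure (Config d)} (hm : IsBernoulli q m)
    (y : Fin d → ℤ) : m.map (FullShift.shift y) = m := by
  have := hm.isProbabilityMeasure
  have hshift : Measurable (FullShift.shift y : Config d → Config d) :=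
    FullShift.measurable_shift y
  have := Measure.isProbabilityMeasure_map (μ := m) hshift.aemeasurable
  refine ext_of_generate_finite _ FullShift.pi_eq_generateFrom_cylinders
    FullShift.isPiSystem_cylinders ?_ (by simp)
  rintro _ ⟨s, η, rfl⟩
  rw [Measure.map_apply hshift (FullShift.measurableSet_cylinder s η),
    FullShift.shift_preimage_cylinder]
  unfold FullShift.cylinder
  rw [hm, hm, Finset.prod_map]
  simp

theorem adj_add_add_left {u v : Fin d → ℤ} (y : Fin d → ℤ) : adj (y + u) (y + v) ↔ adj u v := by
  rw [adj, adj, add_sub_add_left_eq_sub]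

theorem Connected.shift {ω : Config d} {a b y : Fin d → ℤ} (h : Connected ω (y + a) (y + b)) :
    Connected (FullShift.shift y ω) a b := by
  obtain ⟨hne, l, hchain, hocc⟩ := h
  refine ⟨fun hab => hne (by rw [hab]), l.map (-y + ·), ?_, ?_⟩
  · have := List.isChain_map_of_isChain (-y + ·) (fun u v => (adj_add_add_left (-y)).mpr) hchain
    exact (by simpa using this : List.IsChain adj _)
  · simpa using hocc

theorem connected_shift_iff {ω : Config d} {a b y : Fin d → ℤ} :
    Connected (FullShift.shift y ω) a b ↔ Connected ω (y + a) (y + b) := by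
  refine ⟨fun h => ?_, Connected.shift⟩
  have h' : Connected (FullShift.shift y ω) (-y + (y + a)) (-y + (y + b)) := by simpa using h
  simpa [← FullShift.shift_add] using h'.shift

theorem measurableSet_connected (a b : Fin d → ℤ) :
    MeasurableSet {ω : Config d | Connected ω a b} := by
  have : {ω : Config d | Connected ω a b} =
      ⋃ l ∈ {l : List (Fin d → ℤ) | a ≠ b ∧ List.IsChain adj (a :: (l ++ [b]))},
        FullShift.cylinder l.toFinset fun _ => true := by
    ext ω
    simp [Connected, FullShift.mem_cylinder, and_assoc, List.Chain]
  rw [this]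
  exact .biUnion (Set.to_countable _) fun l _ => FullShift.measurableSet_cylinder _ _

theorem IsBernoulli.measure_connected {q : ℝ} {m : Measure (Config d)} (hm : IsBernoulli q m)
    (y x : Fin d → ℤ) : m {ω | Connected ω y x} = m {ω | Connected ω 0 (-y + x)} := by
  calc m {ω | Connected ω y x}
      = m (FullShift.shift y ⁻¹' {ω | Connected ω 0 (-y + x)}) := by
        congr 1; ext; simp [connected_shift_iff]
    _ = m.map (FullShift.shift y) {ω | Connected ω 0 (-y + x)} :=
        (Measure.map_apply (FullShift.measurable_shift y) (measurableSet_connected _ _)).symm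
    _ = m {ω | Connected ω 0 (-y + x)} := by rw [hm.map_shift]

theorem IsBernoulli.tsum_measure_connected {q : ℝ} {m : Measure (Config d)}
    (hm : IsBernoulli q m) (y : Fin d → ℤ) :
    ∑' x, m {ω | Connected ω y x} = ∑' x, m {ω | Connected ω 0 x} := by
  simp_rw [hm.measure_connected y]
  exact (Equiv.addLeft (-y)).tsum_eq fun x => m {ω | Connected ω 0 x}

theorem increasingEvent_connected (a b : Fin d → ℤ) :
    IncreasingEvent {ω : Config d | Connected ω a b} := by
  rintro ω ω' hle ⟨hne, l, hchain, hocc⟩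
  exact ⟨hne, l, hchain, fun v hv => hle v (hocc v hv)⟩

theorem pivotal_connected_subset_disjOcc (x y : Fin d → ℤ) :
    {ω : Config d | Pivotal {ω' | Connected ω' 0 x} y ω} ⊆
      DisjOcc {ω | Connected ω 0 y} {ω | Connected ω y x} := by
  rintro ω ⟨⟨h0x, l, hchain, hocc⟩, hclosed⟩
  obtain ⟨l', hl'l, hchain', hnodup⟩ := List.exists_subset_isChain_nodup h0x hchain
  have hocc' (v : Fin d → ℤ) (hv : v ∈ l') (hvy : v ≠ y) : ω v = true := by
    simpa [Function.update_of_ne hvy] using hocc v (hl'l hv)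
  have hy : y ∈ l' := by
    by_contra hy
    refine hclosed ⟨h0x, l', hchain', fun v hv => ?_⟩
    have hvy : v ≠ y := ne_of_mem_of_not_mem hv hy
    rw [Function.update_of_ne hvy]
    exact hocc' v hv hvy
  obtain ⟨l₁, l₂, rfl⟩ := List.append_of_mem hy
  obtain ⟨hchain₁, hchain₂⟩ := List.isChain_cons_split.mp (by simpa using hchain')
  simp only [List.append_assoc, List.cons_append, List.nodup_cons, List.mem_append, List.mem_cons,
    List.not_mem_nil, or_false, not_or, List.nodup_append, not_false_eq_true, List.nodup_nil,
    and_self, ne_eq, forall_eq, true_and, forall_eq_or_imp] at hnodup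
  obtain ⟨⟨-, h0y, -, -⟩, -, ⟨⟨hyl₂, hyx⟩, -, -⟩, hl₁⟩ := hnodup
  refine ⟨{v | v ∈ l₁}, {v | v ∈ l₂},
    Set.disjoint_left.mpr fun v hv₁ hv₂ => (hl₁ v hv₁).2 v (.inl hv₂) rfl, ?_, ?_⟩
  · intro ω' hω'
    exact ⟨h0y, l₁, hchain₁, fun v hv => (hω' v hv).trans (hocc' v (by simp [hv]) (hl₁ v hv).1)⟩
  · intro ω' hω'
    refine ⟨hyx, l₂, hchain₂, fun v hv => (hω' v hv).trans (hocc' v (by simp [hv]) ?_)⟩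
    rintro rfl
    exact hyl₂ hv

theorem IsBernoulli.tsum_tsum_measure_pivotal_le_sq {q : ℝ} {m : Measure (Config d)}
    (hm : IsBernoulli q m)
    (hBK : ∀ A B : Set (Config d), IncreasingEvent A → IncreasingEvent B →
      m (DisjOcc A B) ≤ m A * m B) :
    ∑' x, ∑' y, m {ω | Pivotal {ω' | Connected ω' 0 x} y ω} ≤
      (∑' x, m {ω | Connected ω 0 x}) ^ 2 :=
  calc ∑' x, ∑' y, m {ω | Pivotal {ω' | Connected ω' 0 x} y ω}
      ≤ ∑' x, ∑' y, m {ω | Connected ω 0 y} * m {ω | Connected ω y x} :=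
        ENNReal.tsum_le_tsum fun x => ENNReal.tsum_le_tsum fun y =>
          (measure_mono (pivotal_connected_subset_disjOcc x y)).trans
            (hBK _ _ (increasingEvent_connected 0 y) (increasingEvent_connected y x))
    _ = ∑' y, m {ω | Connected ω 0 y} * ∑' x, m {ω | Connected ω y x} := by
        rw [ENNReal.tsum_comm]
        simp_rw [ENNReal.tsum_mul_left]
    _ = (∑' x, m {ω | Connected ω 0 x}) ^ 2 := by
        simp_rw [hm.tsum_measure_connected, ENNReal.tsum_mul_right, sq]

theorem deriv_sum_tau_le_sq_general (d : ℕ) (μ : ℝ → Measure (Config d))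
    (hber : ∀ q ∈ Set.Icc (0 : ℝ) 1, IsBernoulli q (μ q))
    (T : ℝ → ℝ) (hT : ∀ q, T q = ∑' x : Fin d → ℤ, tau (μ q) x)
    (p : ℝ) (hp : p ∈ Set.Ioo (0 : ℝ) 1)
    (hRusso : HasDerivAt T
      (∑' x : Fin d → ℤ, ∑' y : Fin d → ℤ,
        (μ p {ω | Pivotal {ω' | Connected ω' 0 x} y ω}).toReal) p)
    (hBK : ∀ A B : Set (Config d), IncreasingEvent A → IncreasingEvent B →
      μ p (DisjOcc A B) ≤ μ p A * μ p B) :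
    deriv T p ≤ (T p) ^ 2 := by
  have hbp := hber p (Set.Ioo_subset_Icc_self hp)
  have := hbp.isProbabilityMeasure
  set χ := ∑' x, μ p {ω | Connected ω 0 x}
  have hTχ : T p = χ.toReal := by
    rw [hT, ENNReal.tsum_toReal_eq fun x => measure_ne_top _ _]
    rfl
  rcases eq_or_ne χ ⊤ with hχ | hχ
  · -- the divergent real series is summed to the junk value `T p = 0`, a minimum of `T ≥ 0`
    have hmin : IsLocalMin T p := .of_forall fun q => by
      rw [hTχ, hχ, hT q]
      exact tsum_nonneg fun x => ENNReal.toReal_nonneg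
    rw [hmin.deriv_eq_zero, hTχ, hχ]
    simp
  · have hpiv := hbp.tsum_tsum_measure_pivotal_le_sq hBK
    rw [hRusso.deriv, ENNReal.tsum_tsum_toReal_eq (ne_top_of_le_ne_top (pow_ne_top hχ) hpiv),
      hTχ, ← ENNReal.toReal_pow]
    exact ENNReal.toReal_mono (pow_ne_top hχ) hpiv

/-- Assuming Russo's formula (for the derivative of `T(p) = ∑_x τ_p(x)`, expressed via
pivotal points) and the BK inequality as hypotheses, subcritical site percolation
satisfies the differential inequality `T'(p) ≤ T(p)²`. -/
theorem deriv_sum_tau_le_sq (d : ℕ) (μ : ℝ → Measure (Config d))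
    (hprob : ∀ q ∈ Set.Icc (0 : ℝ) 1, IsProbabilityMeasure (μ q))
    (hber : ∀ q ∈ Set.Icc (0 : ℝ) 1, IsBernoulli q (μ q))
    (T : ℝ → ℝ) (hT : ∀ q, T q = ∑' x : Fin d → ℤ, tau (μ q) x)
    (p : ℝ) (hp : p ∈ Set.Ioo (0 : ℝ) 1) (hsub : p < pc μ)
    (hRusso : HasDerivAt T
      (∑' x : Fin d → ℤ, ∑' y : Fin d → ℤ,
        (μ p {ω | Pivotal {ω' | Connected ω' 0 x} y ω}).toReal) p)
    (hBK : ∀ A B : Set (Config d), IncreasingEvent A → IncreasingEvent B →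
      μ p (DisjOcc A B) ≤ μ p A * μ p B) :
    deriv T p ≤ (T p) ^ 2 :=
  deriv_sum_tau_le_sq_general d μ hber T hT p hp hRusso hBK
end

section
/- Let A(l) = (1 - a(l))^{-1} where a : ℝ^d → ℝ satisfies |a(l)| < 1, and suppose a is the Fourier transform of a symmetric summable function. Then for all k, l: |A(l+k) + A(l-k) - 2A(l)| ≤ (|a|^(0) - |a|^(k)) · ( [A(l-k) + A(l+k)] A(l) + 8 A(l-k) A(l+k) A(l) [|a|^(0) - |a|^(l)] ), where |a|^ denotes the Fourier transform of the absolute value of the underlying function, provided A(·) ≥ 0 everywhere. -/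
/-- Fourier transform on `ℤ^d` of a symmetric summable function (via cosines). -/
noncomputable def fourierZd (d : ℕ) (α : (Fin d → ℤ) → ℝ) (l : Fin d → ℝ) : ℝ :=
  ∑' x : Fin d → ℤ, Real.cos (∑ i, l i * (x i : ℝ)) * α x

private lemma summable_weight {d : ℕ} {α : (Fin d → ℤ) → ℝ}
    (hsum : Summable fun x => |α x|) (w : (Fin d → ℤ) → ℝ) (hw : ∀ x, |w x| ≤ 2) :
    Summable fun x => |w x * α x| := by
  refine Summable.of_nonneg_of_le (fun x => abs_nonneg _) (fun x => ?_) (hsum.mul_left 2)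
  rw [abs_mul]
  exact mul_le_mul_of_nonneg_right (hw x) (abs_nonneg _)

private lemma inv_identity (u P Q : ℝ) (h1 : u - P + Q ≠ 0) (h2 : u - P - Q ≠ 0) (hu : u ≠ 0) :
    (u - P + Q)⁻¹ + (u - P - Q)⁻¹ - 2 * u⁻¹
      = P * (((u - P - Q)⁻¹ + (u - P + Q)⁻¹) * u⁻¹)
        + 2 * Q ^ 2 * ((u - P - Q)⁻¹ * (u - P + Q)⁻¹ * u⁻¹) := by
  field_simp
  ring

private lemma abs_tsum_le_tsum {ι : Type*} {f g : ι → ℝ} (hg : Summable g)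
    (h : ∀ x, |f x| ≤ g x) : |∑' x, f x| ≤ ∑' x, g x := by
  have hfa : Summable fun x => |f x| :=
    hg.of_nonneg_of_le (fun x => abs_nonneg _) h
  have hf : Summable fun x => ‖f x‖ := by simpa [Real.norm_eq_abs] using hfa
  calc |∑' x, f x| = ‖∑' x, f x‖ := (Real.norm_eq_abs _).symm
    _ ≤ ∑' x, ‖f x‖ := norm_tsum_le_tsum_norm hf
    _ = ∑' x, |f x| := by simp [Real.norm_eq_abs]
    _ ≤ ∑' x, g x := Summable.tsum_le_tsum h hfa hg

set_option maxHeartbeats 1000000 in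
/-- Slade's bound on the discretized second derivative of `A = (1 - â)⁻¹`, for `â`
the Fourier transform of a symmetric summable `α : ℤ^d → ℝ` with `1 - â(l) > 0`
everywhere: `|A(l+k) + A(l-k) - 2A(l)| ≤ (|α|^(0) - |α|^(k)) ·
([A(l-k)+A(l+k)]A(l) + 8 A(l-k)A(l+k)A(l)[|α|^(0) - |α|^(l)])`. -/
theorem slade_delta_bound (d : ℕ) (α : (Fin d → ℤ) → ℝ)
    (hsymm : ∀ x, α (-x) = α x) (hsum : Summable fun x => |α x|)
    (hpos : ∀ l, 0 < 1 - fourierZd d α l)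
    (A : (Fin d → ℝ) → ℝ) (hA : ∀ l, A l = (1 - fourierZd d α l)⁻¹)
    (k l : Fin d → ℝ) :
    |A (l + k) + A (l - k) - 2 * A l| ≤
      (fourierZd d (fun x => |α x|) 0 - fourierZd d (fun x => |α x|) k) *
        ((A (l - k) + A (l + k)) * A l +
          8 * A (l - k) * A (l + k) * A l *
            (fourierZd d (fun x => |α x|) 0 - fourierZd d (fun x => |α x|) l)) := by
  classical
  set La : (Fin d → ℤ) → ℝ := fun x => ∑ i, l i * (x i : ℝ) with hLa
  set Ka : (Fin d → ℤ) → ℝ := fun x => ∑ i, k i * (x i : ℝ) with hKa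
  have habs : Summable fun x => |(|α x|)| := by simpa [abs_abs] using hsum
  -- basic trig facts
  have hcos1 : ∀ t : ℝ, |Real.cos t| ≤ 1 := fun t => Real.abs_cos_le_one t
  have hsin1 : ∀ t : ℝ, |Real.sin t| ≤ 1 := fun t => Real.abs_sin_le_one t
  -- summability of all weighted series
  have wP : ∀ x, |Real.cos (La x) * (Real.cos (Ka x) - 1)| ≤ 2 := by
    intro x
    rw [abs_mul]
    have h1 := hcos1 (La x)
    have h2 : |Real.cos (Ka x) - 1| ≤ 2 := by
      have := Real.cos_le_one (Ka x); have := Real.neg_one_le_cos (Ka x)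
      rw [abs_le]; constructor <;> linarith
    nlinarith [abs_nonneg (Real.cos (La x)), abs_nonneg (Real.cos (Ka x) - 1)]
  have wQ : ∀ x, |Real.sin (La x) * Real.sin (Ka x)| ≤ 2 := by
    intro x
    rw [abs_mul]
    nlinarith [hsin1 (La x), hsin1 (Ka x), abs_nonneg (Real.sin (La x)),
      abs_nonneg (Real.sin (Ka x))]
  have wcos : ∀ (M : (Fin d → ℤ) → ℝ) x, |Real.cos (M x)| ≤ 2 := fun M x =>
    (hcos1 (M x)).trans one_le_two
  have w1c : ∀ (M : (Fin d → ℤ) → ℝ) x, |1 - Real.cos (M x)| ≤ 2 := by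
    intro M x
    have := Real.cos_le_one (M x); have := Real.neg_one_le_cos (M x)
    rw [abs_le]; constructor <;> linarith
  have wsq : ∀ (M : (Fin d → ℤ) → ℝ) x, |Real.sin (M x) ^ 2| ≤ 2 := by
    intro M x
    have := Real.sin_sq_le_one (M x)
    have := sq_nonneg (Real.sin (M x))
    rw [abs_le]; constructor <;> linarith
  -- the summable series we use
  have sPa : Summable fun x => |Real.cos (La x) * (Real.cos (Ka x) - 1) * α x| :=
    summable_weight hsum _ wP
  have sP : Summable fun x => Real.cos (La x) * (Real.cos (Ka x) - 1) * α x := sPa.of_abs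
  have sQa : Summable fun x => |Real.sin (La x) * Real.sin (Ka x) * α x| :=
    summable_weight hsum _ wQ
  have sQ : Summable fun x => Real.sin (La x) * Real.sin (Ka x) * α x := sQa.of_abs
  have sL : Summable fun x => Real.cos (La x) * α x := (summable_weight hsum _ (wcos La)).of_abs
  have scosKabs : Summable fun x => Real.cos (Ka x) * |α x| := by
    have := (summable_weight habs (fun x => Real.cos (Ka x)) (wcos Ka)).of_abs
    simpa using this
  have scosLabs : Summable fun x => Real.cos (La x) * |α x| := by
    have := (summable_weight habs (fun x => Real.cos (La x)) (wcos La)).of_abs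
    simpa using this
  have sCk : Summable fun x => (1 - Real.cos (Ka x)) * |α x| := by
    have := (summable_weight habs (fun x => 1 - Real.cos (Ka x)) (w1c Ka)).of_abs
    simpa using this
  have sCl : Summable fun x => (1 - Real.cos (La x)) * |α x| := by
    have := (summable_weight habs (fun x => 1 - Real.cos (La x)) (w1c La)).of_abs
    simpa using this
  have sSl : Summable fun x => Real.sin (La x) ^ 2 * |α x| := by
    have := (summable_weight habs (fun x => Real.sin (La x) ^ 2) (wsq La)).of_abs
    simpa using this
  have sSk : Summable fun x => Real.sin (Ka x) ^ 2 * |α x| := by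
    have := (summable_weight habs (fun x => Real.sin (Ka x) ^ 2) (wsq Ka)).of_abs
    simpa using this
  -- the main quantities
  set P : ℝ := ∑' x, Real.cos (La x) * (Real.cos (Ka x) - 1) * α x with hP
  set Q : ℝ := ∑' x, Real.sin (La x) * Real.sin (Ka x) * α x with hQ
  set Ck : ℝ := ∑' x, (1 - Real.cos (Ka x)) * |α x| with hCk
  set Cl : ℝ := ∑' x, (1 - Real.cos (La x)) * |α x| with hCl
  set Sl : ℝ := ∑' x, Real.sin (La x) ^ 2 * |α x| with hSl
  set Sk : ℝ := ∑' x, Real.sin (Ka x) ^ 2 * |α x| with hSk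
  -- identification of the Fourier differences
  have hC0 : fourierZd d (fun x => |α x|) 0 = ∑' x, |α x| := by
    unfold fourierZd; simp
  have hCkdef : fourierZd d (fun x => |α x|) 0 - fourierZd d (fun x => |α x|) k = Ck := by
    rw [hC0]
    have h2 : fourierZd d (fun x => |α x|) k = ∑' x, Real.cos (Ka x) * |α x| := rfl
    rw [h2, ← Summable.tsum_sub hsum scosKabs, hCk]
    exact tsum_congr fun x => by ring
  have hCldef : fourierZd d (fun x => |α x|) 0 - fourierZd d (fun x => |α x|) l = Cl := by
    rw [hC0]
    have h2 : fourierZd d (fun x => |α x|) l = ∑' x, Real.cos (La x) * |α x| := rfl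
    rw [h2, ← Summable.tsum_sub hsum scosLabs, hCl]
    exact tsum_congr fun x => by ring
  -- a(l ± k) = a(l) + P ∓ Q
  have ha_pk : fourierZd d α (l + k) = fourierZd d α l + P - Q := by
    have h1 : ∀ x : Fin d → ℤ, Real.cos (∑ i, (l + k) i * (x i : ℝ)) * α x
        = (Real.cos (La x) * α x + Real.cos (La x) * (Real.cos (Ka x) - 1) * α x)
          - Real.sin (La x) * Real.sin (Ka x) * α x := by
      intro x
      have hx : (∑ i, (l + k) i * (x i : ℝ)) = La x + Ka x := by
        rw [hLa, hKa, ← Finset.sum_add_distrib]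
        exact Finset.sum_congr rfl fun i _ => by simp [add_mul]
      rw [hx, Real.cos_add]; ring
    have h0 : fourierZd d α (l + k) = ∑' x, Real.cos (∑ i, (l + k) i * (x i : ℝ)) * α x := rfl
    rw [h0, tsum_congr h1, Summable.tsum_sub (sL.add sP) sQ, Summable.tsum_add sL sP]
    rfl
  have ha_mk : fourierZd d α (l - k) = fourierZd d α l + P + Q := by
    have h1 : ∀ x : Fin d → ℤ, Real.cos (∑ i, (l - k) i * (x i : ℝ)) * α x
        = (Real.cos (La x) * α x + Real.cos (La x) * (Real.cos (Ka x) - 1) * α x)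
          + Real.sin (La x) * Real.sin (Ka x) * α x := by
      intro x
      have hx : (∑ i, (l - k) i * (x i : ℝ)) = La x - Ka x := by
        rw [hLa, hKa, ← Finset.sum_sub_distrib]
        exact Finset.sum_congr rfl fun i _ => by simp [sub_mul]
      rw [hx, Real.cos_sub]; ring
    have h0 : fourierZd d α (l - k) = ∑' x, Real.cos (∑ i, (l - k) i * (x i : ℝ)) * α x := rfl
    rw [h0, tsum_congr h1, Summable.tsum_add (sL.add sP) sQ, Summable.tsum_add sL sP]
    rfl
  -- positivity
  have hu : 0 < 1 - fourierZd d α l := hpos l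
  have hup : 0 < 1 - fourierZd d α (l + k) := hpos (l + k)
  have hum : 0 < 1 - fourierZd d α (l - k) := hpos (l - k)
  have e1 : 1 - fourierZd d α (l + k) = (1 - fourierZd d α l) - P + Q := by
    rw [ha_pk]; ring
  have e2 : 1 - fourierZd d α (l - k) = (1 - fourierZd d α l) - P - Q := by
    rw [ha_mk]; ring
  -- the algebraic identity
  have hid : A (l + k) + A (l - k) - 2 * A l
      = P * ((A (l - k) + A (l + k)) * A l) + 2 * Q ^ 2 * (A (l - k) * A (l + k) * A l) := by
    rw [hA (l + k), hA (l - k), hA l, e1, e2]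
    have h1 : (1 - fourierZd d α l) - P + Q ≠ 0 := by rw [← e1]; exact hup.ne'
    have h2 : (1 - fourierZd d α l) - P - Q ≠ 0 := by rw [← e2]; exact hum.ne'
    exact inv_identity _ P Q h1 h2 hu.ne'
  -- bound |P| ≤ Ck
  have hPb : |P| ≤ Ck := by
    refine abs_tsum_le_tsum sCk fun x => ?_
    rw [abs_mul, abs_mul]
    have h2 : |Real.cos (Ka x) - 1| = 1 - Real.cos (Ka x) := by
      rw [abs_of_nonpos (by linarith [Real.cos_le_one (Ka x)])]; ring
    rw [h2]
    have h3 : 0 ≤ 1 - Real.cos (Ka x) := by linarith [Real.cos_le_one (Ka x)]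
    nlinarith [mul_le_mul_of_nonneg_right
      (mul_le_mul_of_nonneg_right (hcos1 (La x)) h3) (abs_nonneg (α x))]
  -- bound Q^2 ≤ Sl * Sk (Cauchy–Schwarz)
  have hSl0 : 0 ≤ Sl := tsum_nonneg fun x => mul_nonneg (sq_nonneg _) (abs_nonneg _)
  have hSk0 : 0 ≤ Sk := tsum_nonneg fun x => mul_nonneg (sq_nonneg _) (abs_nonneg _)
  have hCl0 : 0 ≤ Cl := tsum_nonneg fun x =>
    mul_nonneg (by linarith [Real.cos_le_one (La x)]) (abs_nonneg _)
  have hCk0 : 0 ≤ Ck := tsum_nonneg fun x =>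
    mul_nonneg (by linarith [Real.cos_le_one (Ka x)]) (abs_nonneg _)
  have hQSS : Q ^ 2 ≤ Sl * Sk := by
    set f : (Fin d → ℤ) → ℝ := fun x => |Real.sin (La x)| * Real.sqrt |α x| with hf
    set g : (Fin d → ℤ) → ℝ := fun x => |Real.sin (Ka x)| * Real.sqrt |α x| with hg
    have hfg : ∀ x, f x * g x = |Real.sin (La x) * Real.sin (Ka x) * α x| := by
      intro x
      rw [hf, hg, abs_mul, abs_mul]
      have h := Real.mul_self_sqrt (abs_nonneg (α x))
      linear_combination (|Real.sin (La x)| * |Real.sin (Ka x)|) * h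
    have hf2 : ∀ x, f x ^ 2 = Real.sin (La x) ^ 2 * |α x| := by
      intro x; rw [hf, mul_pow, sq_abs, Real.sq_sqrt (abs_nonneg _)]
    have hg2 : ∀ x, g x ^ 2 = Real.sin (Ka x) ^ 2 * |α x| := by
      intro x; rw [hg, mul_pow, sq_abs, Real.sq_sqrt (abs_nonneg _)]
    have hRs : Summable fun x => f x * g x := by
      refine sQa.congr fun x => (hfg x).symm
    have hQR : |Q| ≤ ∑' x, f x * g x :=
      abs_tsum_le_tsum hRs fun x => le_of_eq (hfg x).symm
    have hRb : (∑' x, f x * g x) ≤ Real.sqrt (Sl * Sk) := by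
      refine Summable.tsum_le_of_sum_le hRs fun s => ?_
      have cs := Real.sum_mul_le_sqrt_mul_sqrt s f g
      have hsl : ∑ x ∈ s, f x ^ 2 ≤ Sl := by
        rw [Finset.sum_congr rfl fun x _ => hf2 x]
        exact Summable.sum_le_tsum s (fun x _ => mul_nonneg (sq_nonneg _) (abs_nonneg _)) sSl
      have hsk : ∑ x ∈ s, g x ^ 2 ≤ Sk := by
        rw [Finset.sum_congr rfl fun x _ => hg2 x]
        exact Summable.sum_le_tsum s (fun x _ => mul_nonneg (sq_nonneg _) (abs_nonneg _)) sSk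
      calc ∑ x ∈ s, f x * g x
          ≤ Real.sqrt (∑ x ∈ s, f x ^ 2) * Real.sqrt (∑ x ∈ s, g x ^ 2) := cs
        _ ≤ Real.sqrt Sl * Real.sqrt Sk := by
            exact mul_le_mul (Real.sqrt_le_sqrt hsl) (Real.sqrt_le_sqrt hsk)
              (Real.sqrt_nonneg _) (Real.sqrt_nonneg _)
        _ = Real.sqrt (Sl * Sk) := (Real.sqrt_mul hSl0 _).symm
    have h1 : |Q| ≤ Real.sqrt (Sl * Sk) := hQR.trans hRb
    have h2 : Q ^ 2 ≤ Real.sqrt (Sl * Sk) ^ 2 := by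
      rw [← sq_abs]
      exact pow_le_pow_left₀ (abs_nonneg _) h1 2
    rwa [Real.sq_sqrt (mul_nonneg hSl0 hSk0)] at h2
  -- Sl ≤ 2 Cl and Sk ≤ 2 Ck
  have hSlb : Sl ≤ 2 * Cl := by
    rw [hSl, hCl, ← tsum_mul_left]
    refine Summable.tsum_le_tsum (fun x => ?_) sSl (sCl.mul_left 2)
    rw [Real.sin_sq]
    nlinarith [mul_nonneg (sq_nonneg (1 - Real.cos (La x))) (abs_nonneg (α x))]
  have hSkb : Sk ≤ 2 * Ck := by
    rw [hSk, hCk, ← tsum_mul_left]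
    refine Summable.tsum_le_tsum (fun x => ?_) sSk (sCk.mul_left 2)
    rw [Real.sin_sq]
    nlinarith [mul_nonneg (sq_nonneg (1 - Real.cos (Ka x))) (abs_nonneg (α x))]
  clear sPa sP sQa sQ sL scosKabs scosLabs sCk sCl sSl sSk wP wQ wcos w1c wsq habs
  clear hP hQ hCk hCl hSl hSk hC0 ha_pk ha_mk e1 e2 hLa hKa hcos1 hsin1
  clear_value P Q Ck Cl Sl Sk
  have hQb : Q ^ 2 ≤ 4 * Cl * Ck := by
    have h1 : Sl * Sk ≤ (2 * Cl) * (2 * Ck) :=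
      mul_le_mul hSlb hSkb hSk0 (by linarith)
    have h2 : (2 * Cl) * (2 * Ck) = 4 * Cl * Ck := by ring
    exact hQSS.trans (h1.trans_eq h2)
  -- positivity of A values
  have hA1 : 0 < A (l + k) := by rw [hA]; exact inv_pos.2 hup
  have hA2 : 0 < A (l - k) := by rw [hA]; exact inv_pos.2 hum
  have hA3 : 0 < A l := by rw [hA]; exact inv_pos.2 hu
  -- finish
  rw [hCkdef, hCldef, hid]
  have hX : 0 < (A (l - k) + A (l + k)) * A l := by positivity
  have hY : 0 < A (l - k) * A (l + k) * A l := by positivity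
  calc |P * ((A (l - k) + A (l + k)) * A l) + 2 * Q ^ 2 * (A (l - k) * A (l + k) * A l)|
      ≤ |P * ((A (l - k) + A (l + k)) * A l)|
        + |2 * Q ^ 2 * (A (l - k) * A (l + k) * A l)| := abs_add_le _ _
    _ = |P| * ((A (l - k) + A (l + k)) * A l)
        + 2 * Q ^ 2 * (A (l - k) * A (l + k) * A l) := by
        have habs1 : |P * ((A (l - k) + A (l + k)) * A l)|
            = |P| * ((A (l - k) + A (l + k)) * A l) := by
          rw [abs_mul, abs_of_pos hX]
        have habs2 : |2 * Q ^ 2 * (A (l - k) * A (l + k) * A l)|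
            = 2 * Q ^ 2 * (A (l - k) * A (l + k) * A l) :=
          abs_of_nonneg (mul_nonneg (by positivity) hY.le)
        rw [habs1, habs2]
    _ ≤ Ck * ((A (l - k) + A (l + k)) * A l + 8 * A (l - k) * A (l + k) * A l * Cl) := by
        nlinarith [mul_le_mul_of_nonneg_right hPb hX.le,
          mul_le_mul_of_nonneg_right hQb hY.le]
end

section
/- In the setting of the previous lemma, for the simple random walk Green's function one has |Ĝ_λ(l+k) + Ĝ_λ(l-k) - 2Ĝ_λ(l)| ≤ (1 - D̂(k)) ( Ĝ_λ(l)Ĝ_λ(l-k) + Ĝ_λ(l)Ĝ_λ(l+k) + 8 Ĝ_λ(l-k)Ĝ_λ(l+k) ) for all λ ∈ [0,1) and k, l ∈ ℝ^d. -/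
/-- Fourier transform of the simple random walk step distribution:
`D̂(k) = (1/d) ∑_{j} cos(k_j)`. -/
noncomputable def Dhat (d : ℕ) (k : Fin d → ℝ) : ℝ :=
  (1 / d) * ∑ i, Real.cos (k i)

/-- `Ĝ_λ(k) = (1 - λ D̂(k))⁻¹`. -/
noncomputable def Ghat (d : ℕ) (lam : ℝ) (k : Fin d → ℝ) : ℝ :=
  (1 - lam * Dhat d k)⁻¹

lemma one_sub_Dhat (d : ℕ) (hd : 0 < d) (k : Fin d → ℝ) :
    1 - Dhat d k = (1 / d) * ∑ i, (1 - Real.cos (k i)) := by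
  have hd' : (d : ℝ) ≠ 0 := Nat.cast_ne_zero.mpr hd.ne'
  unfold Dhat
  rw [Finset.sum_sub_distrib, Finset.sum_const, Finset.card_univ, Fintype.card_fin,
    nsmul_eq_mul, mul_one]
  field_simp

lemma Dhat_sub_add (d : ℕ) (k l : Fin d → ℝ) :
    Dhat d l - Dhat d (l + k) =
      (1 / d) * ∑ i, (Real.cos (l i) * (1 - Real.cos (k i)) + Real.sin (l i) * Real.sin (k i)) := by
  unfold Dhat
  simp only [Pi.add_apply]
  rw [← mul_sub, ← Finset.sum_sub_distrib]
  congr 1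
  apply Finset.sum_congr rfl
  intro i _
  rw [Real.cos_add]
  ring

lemma Dhat_sub_sub (d : ℕ) (k l : Fin d → ℝ) :
    Dhat d l - Dhat d (l - k) =
      (1 / d) * ∑ i, (Real.cos (l i) * (1 - Real.cos (k i)) - Real.sin (l i) * Real.sin (k i)) := by
  unfold Dhat
  simp only [Pi.sub_apply]
  rw [← mul_sub, ← Finset.sum_sub_distrib]
  congr 1
  apply Finset.sum_congr rfl
  intro i _
  rw [Real.cos_sub]
  ring

lemma abs_Dhat_le_one (d : ℕ) (hd : 0 < d) (k : Fin d → ℝ) : |Dhat d k| ≤ 1 := by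
  have hd' : (0 : ℝ) < d := by exact_mod_cast hd
  unfold Dhat
  rw [abs_mul, abs_of_nonneg (by positivity : (0:ℝ) ≤ 1 / d)]
  have h1 : |∑ i, Real.cos (k i)| ≤ (d : ℝ) := by
    calc |∑ i, Real.cos (k i)| ≤ ∑ i, |Real.cos (k i)| := Finset.abs_sum_le_sum_abs _ _
      _ ≤ ∑ _i : Fin d, (1 : ℝ) := Finset.sum_le_sum fun i _ => Real.abs_cos_le_one _
      _ = d := by simp
  calc 1 / (d : ℝ) * |∑ i, Real.cos (k i)| ≤ 1 / d * d := by
        exact mul_le_mul_of_nonneg_left h1 (by positivity)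
    _ = 1 := by field_simp

set_option maxHeartbeats 1600000 in
/-- Bound on the discretized second derivative of the random walk Green's function:
`|Ĝ_λ(l+k) + Ĝ_λ(l-k) - 2Ĝ_λ(l)| ≤ (1 - D̂(k)) (Ĝ_λ(l)Ĝ_λ(l-k) + Ĝ_λ(l)Ĝ_λ(l+k)
+ 8 Ĝ_λ(l-k)Ĝ_λ(l+k))`. -/
theorem green_delta_bound (d : ℕ) (hd : 0 < d) (lam : ℝ) (h0 : 0 ≤ lam) (h1 : lam < 1)
    (k l : Fin d → ℝ) :
    |Ghat d lam (l + k) + Ghat d lam (l - k) - 2 * Ghat d lam l| ≤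
      (1 - Dhat d k) *
        (Ghat d lam l * Ghat d lam (l - k) + Ghat d lam l * Ghat d lam (l + k) +
          8 * Ghat d lam (l - k) * Ghat d lam (l + k)) := by
  have hd' : (0 : ℝ) < d := by exact_mod_cast hd
  -- positivity of the denominators
  have hpos : ∀ x : Fin d → ℝ, 0 < 1 - lam * Dhat d x := by
    intro x
    have h := abs_Dhat_le_one d hd x
    have : lam * Dhat d x ≤ lam * 1 := by
      apply mul_le_mul_of_nonneg_left _ h0
      exact (abs_le.mp h).2
    nlinarith
  simp only [Ghat]
  set A : ℝ := 1 - lam * Dhat d (l + k) with hA_def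
  set B : ℝ := 1 - lam * Dhat d (l - k) with hB_def
  set C : ℝ := 1 - lam * Dhat d l with hC_def
  have hA : 0 < A := hpos (l + k)
  have hB : 0 < B := hpos (l - k)
  have hC : 0 < C := hpos l
  set Q : ℝ := 1 - Dhat d k with hQ_def
  set P : ℝ := 1 - Dhat d l with hP_def
  set U : ℝ := (1 / d) * ∑ i, Real.cos (l i) * (1 - Real.cos (k i)) with hU_def
  set V : ℝ := (1 / d) * ∑ i, Real.sin (l i) * Real.sin (k i) with hV_def
  -- structural identities
  have hUV1 : Dhat d l - Dhat d (l + k) = U + V := by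
    rw [Dhat_sub_add d k l, Finset.sum_add_distrib, mul_add, hU_def, hV_def]
  have hUV2 : Dhat d l - Dhat d (l - k) = U - V := by
    rw [Dhat_sub_sub d k l, Finset.sum_sub_distrib, mul_sub, hU_def, hV_def]
  have hA_eq : A = C + lam * (U + V) := by
    rw [hA_def, hC_def, ← hUV1]; ring
  have hB_eq : B = C + lam * (U - V) := by
    rw [hB_def, hC_def, ← hUV2]; ring
  -- basic bounds
  have hQsum : Q = (1 / d) * ∑ i, (1 - Real.cos (k i)) := one_sub_Dhat d hd k
  have hPsum : P = (1 / d) * ∑ i, (1 - Real.cos (l i)) := one_sub_Dhat d hd l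
  have hcosk : ∀ i, 0 ≤ 1 - Real.cos (k i) := fun i => by nlinarith [Real.cos_le_one (k i)]
  have hcosl : ∀ i, 0 ≤ 1 - Real.cos (l i) := fun i => by nlinarith [Real.cos_le_one (l i)]
  have hQ0 : 0 ≤ Q := by
    rw [hQsum]
    exact mul_nonneg (by positivity) (Finset.sum_nonneg fun i _ => hcosk i)
  have hP0 : 0 ≤ P := by
    rw [hPsum]
    exact mul_nonneg (by positivity) (Finset.sum_nonneg fun i _ => hcosl i)
  have hUle : |U| ≤ Q := by
    rw [hU_def, hQsum, abs_mul, abs_of_nonneg (by positivity : (0:ℝ) ≤ 1 / d)]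
    apply mul_le_mul_of_nonneg_left _ (by positivity)
    calc |∑ i, Real.cos (l i) * (1 - Real.cos (k i))|
        ≤ ∑ i, |Real.cos (l i) * (1 - Real.cos (k i))| := Finset.abs_sum_le_sum_abs _ _
      _ ≤ ∑ i, (1 - Real.cos (k i)) := by
          apply Finset.sum_le_sum
          intro i _
          rw [abs_mul, abs_of_nonneg (hcosk i)]
          have := Real.abs_cos_le_one (l i)
          nlinarith [hcosk i]
  have hV2 : V ^ 2 ≤ 4 * (P * Q) := by
    have hcs := Finset.sum_mul_sq_le_sq_mul_sq Finset.univ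
      (fun i => Real.sin (l i)) (fun i => Real.sin (k i))
    have hsl : ∑ i, Real.sin (l i) ^ 2 ≤ 2 * ∑ i, (1 - Real.cos (l i)) := by
      rw [Finset.mul_sum]
      apply Finset.sum_le_sum
      intro i _
      nlinarith [Real.sin_sq_add_cos_sq (l i), Real.cos_le_one (l i)]
    have hsk : ∑ i, Real.sin (k i) ^ 2 ≤ 2 * ∑ i, (1 - Real.cos (k i)) := by
      rw [Finset.mul_sum]
      apply Finset.sum_le_sum
      intro i _
      nlinarith [Real.sin_sq_add_cos_sq (k i), Real.cos_le_one (k i)]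
    have hsl0 : 0 ≤ ∑ i, Real.sin (l i) ^ 2 :=
      Finset.sum_nonneg fun i _ => sq_nonneg _
    have hsk0 : 0 ≤ ∑ i, Real.sin (k i) ^ 2 :=
      Finset.sum_nonneg fun i _ => sq_nonneg _
    have hS : (∑ i, Real.sin (l i) * Real.sin (k i)) ^ 2 ≤
        4 * ((∑ i, (1 - Real.cos (l i))) * (∑ i, (1 - Real.cos (k i)))) := by
      nlinarith [hcs, hsl, hsk, hsl0, hsk0]
    rw [hV_def, hPsum, hQsum]
    have h2 : (0:ℝ) ≤ (1 / d) ^ 2 := by positivity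
    calc ((1 / d : ℝ) * ∑ i, Real.sin (l i) * Real.sin (k i)) ^ 2
        = (1 / d) ^ 2 * (∑ i, Real.sin (l i) * Real.sin (k i)) ^ 2 := by ring
      _ ≤ (1 / d) ^ 2 * (4 * ((∑ i, (1 - Real.cos (l i))) * (∑ i, (1 - Real.cos (k i))))) :=
          mul_le_mul_of_nonneg_left hS h2
      _ = 4 * ((1 / d * ∑ i, (1 - Real.cos (l i))) * (1 / d * ∑ i, (1 - Real.cos (k i)))) := by
          ring
  have hlamP : lam ^ 2 * P ≤ C := by
    have h2 : lam * P ≤ C := by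
      rw [hP_def, hC_def]; nlinarith [(abs_le.mp (abs_Dhat_le_one d hd l)).2]
    nlinarith
  -- the key numerator identity and bound
  have hN : B * C + A * C - 2 * (A * B) = -(lam * U) * (A + B) + 2 * (lam * V) ^ 2 := by
    rw [hA_eq, hB_eq]; ring
  have hUlo := (abs_le.mp hUle).1
  have hUhi := (abs_le.mp hUle).2
  have hx1 : 0 ≤ lam * (Q + U) * (A + B) := by
    apply mul_nonneg (mul_nonneg h0 (by linarith)) (by linarith)
  have hx2 : 0 ≤ lam * (Q - U) * (A + B) := by
    apply mul_nonneg (mul_nonneg h0 (by linarith)) (by linarith)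
  have hx3 : 0 ≤ (1 - lam) * (Q * (A + B)) := by
    apply mul_nonneg (by linarith) (mul_nonneg hQ0 (by linarith))
  have hx4 : 0 ≤ lam ^ 2 * (4 * (P * Q) - V ^ 2) := by
    apply mul_nonneg (sq_nonneg _) (by linarith)
  have hx5 : 0 ≤ 8 * Q * (C - lam ^ 2 * P) := by
    apply mul_nonneg (by linarith) (by linarith)
  have hx6 : 0 ≤ Q * C := mul_nonneg hQ0 hC.le
  have hx7 : 0 ≤ Q * P * lam ^ 2 := by positivity
  have key : |B * C + A * C - 2 * (A * B)| ≤ Q * (A + B + 8 * C) := by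
    rw [hN, abs_le]
    constructor
    · nlinarith [hx2, hx3, hx4, hx5, hx6, sq_nonneg (lam * V)]
    · nlinarith [hx1, hx3, hx4, hx5, hx7]
  -- put everything together
  have hsplit : A⁻¹ + B⁻¹ - 2 * C⁻¹ = (B * C + A * C - 2 * (A * B)) / (A * B * C) := by
    field_simp
  have hABC : 0 < A * B * C := by positivity
  rw [hsplit, abs_div, abs_of_pos hABC, div_le_iff₀ hABC]
  have hrhs : Q * (C⁻¹ * B⁻¹ + C⁻¹ * A⁻¹ + 8 * B⁻¹ * A⁻¹) * (A * B * C)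
      = Q * (A + B + 8 * C) := by
    field_simp
  rw [hrhs]
  exact key
end
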